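/- arXiv:math/0307373 — 2 statements merged into one kernel-verified Lean document; each statement's English description precedes it below -/
import Mathlib

section
/- Let P → M be a principal T-bundle and G a Lie group acting smoothly on M. Then a lift of the G-action on M to an action on P by bundle isomorphisms is equivalent to giving a global section σ of the T-bundle δP = d₀*P ⊗ d₁*P^{-1} over G × M satisfying the cocycle condition δσ = 1 on G² × M, where δσ = d₀*σ ⊗ d₁*σ^{-1} ⊗ d₂*σ. -/
/-!
STATEMENT 1.  For a principal `T`-bundle `π : P → M` (`T = Circle`, acting freely and
transitively on the fibres of `π`) and a Lie group `G` acting on `M`, a lift of the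
`G`-action on `M` to an action on `P` by bundle isomorphisms is equivalent to a section
`σ` of `δP = d₀*P ⊗ d₁*P⁻¹` over `G × M` with `δσ = 1` on `G² × M`.

A section of `δP` over `G × M` is a family of `T`-torsor isomorphisms
`P_x → P_{g·x}`, which we encode as a map `σ : G → P → P` covering the action
(`π (σ g p) = g • π p`) and commuting with the `T`-action; the cocycle condition
`δσ = d₀*σ ⊗ d₁*σ⁻¹ ⊗ d₂*σ = 1` reads `σ (g*h) = σ g ∘ σ h`.  (Smoothness is
suppressed; the content of the lemma is this set-level equivalence.)
-/
theorem stmt1 {G M P : Type*} [Group G] [MulAction G M] [MulAction Circle P]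
    (π : P → M)
    (hπT : ∀ (t : Circle) (p : P), π (t • p) = π p)
    (hfree : ∀ (t : Circle) (p : P), t • p = p → t = 1)
    (htrans : ∀ p q : P, π p = π q → ∃ t : Circle, t • p = q)
    (hsurj : Function.Surjective π) :
    Nonempty
      ({ρ : G → P → P //
          (∀ g p, π (ρ g p) = g • π p) ∧
          (∀ (g : G) (t : Circle) (p : P), ρ g (t • p) = t • ρ g p) ∧
          (∀ p, ρ 1 p = p) ∧
          (∀ g h p, ρ (g * h) p = ρ g (ρ h p))} ≃
       {σ : G → P → P //
          (∀ g p, π (σ g p) = g • π p) ∧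
          (∀ (g : G) (t : Circle) (p : P), σ g (t • p) = t • σ g p) ∧
          (∀ g h p, σ (g * h) p = σ g (σ h p))}) := by
  constructor
  refine
    { toFun := fun ρ => ⟨ρ.1, ρ.2.1, ρ.2.2.1, ρ.2.2.2.2⟩
      invFun := fun σ => ⟨σ.1, σ.2.1, σ.2.2.1, ?_, σ.2.2.2⟩
      left_inv := fun ρ => rfl
      right_inv := fun σ => rfl }
  -- derive σ 1 = id
  obtain ⟨σ, hcov, hequiv, hcoc⟩ := σ
  intro p
  -- σ 1 is injective
  have hinj : Function.Injective (σ 1) := by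
    intro a b hab
    have hπ : π a = π b := by
      have := hcov 1 a
      have h2 := hcov 1 b
      rw [hab] at this
      rw [this] at h2
      simpa using h2
    obtain ⟨t, ht⟩ := htrans a b hπ
    have : σ 1 b = t • σ 1 a := by rw [← ht, hequiv]
    rw [← hab] at this
    have ht1 : t = 1 := hfree t (σ 1 a) this.symm
    rw [ht1, one_smul] at ht
    exact ht
  have : σ 1 (σ 1 p) = σ 1 p := by
    have := hcoc 1 1 p
    simpa using this.symm
  exact hinj this
end

section
/- Let G be a Lie group with Lie algebra 𝔤 acting on M, and let α be a 1-form on G × M lying in F¹A¹ (i.e. vanishing on vectors tangent to M). Then ∂α = d₀*α − d₁*α + d₂*α = 0 on G² × M if and only if the map f : M → 𝔤* defined by ⟨X, f(x)⟩ = α((e,x); X) is G-equivariant, i.e. f(gx) = Ad*_g f(x) for all g ∈ G and x ∈ M, and moreover α is recovered by α((g,x); gX ⊕ V) = ⟨X, f(x)⟩. Hence the kernel of ∂ on F¹A¹(G × M) is isomorphic to the space {f : M → 𝔤* smooth : f(gx) = Ad*_g f(x)}. -/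
/-!
STATEMENT 15.  Let `α ∈ F¹A¹(G × M)` (a 1-form on `G × M` vanishing on vectors
tangent to `M`).  Then `∂α = d₀*α − d₁*α + d₂*α = 0` on `G² × M` iff the map
`f : M → 𝔤*`, `⟨X, f(x)⟩ = α((e,x); X)`, is `G`-equivariant
(`f(gx) = Ad*_g f(x)`) and `α((g,x); gX ⊕ V) = ⟨X, f(x)⟩`.  Hence
`ker(∂) ∩ F¹A¹(G × M) ≅ {f : M → 𝔤* | f(gx) = Ad*_g f(x)}`.

Encoding: under left translation, such an `α` is exactly a map
`a : G × M → 𝔤*` with `a(g,x)(X) = α((g,x); gX ⊕ V)`.  Writing the derivative of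
multiplication in left trivialization, `∂α = 0` becomes the cocycle identity below
(`d₀*` gives `a(g₂,x)X₂`, `d₁*` gives `a(g₁g₂,x)(Ad_{g₂⁻¹}X₁ + X₂)`, `d₂*` gives
`a(g₁, g₂x)X₁`).  `Ad : G → 𝔤 →ₗ 𝔤` is the adjoint representation and
`Ad*_g f = f ∘ Ad_{g⁻¹}`.
-/

theorem stmt15 {G M 𝔤 : Type*} [Group G] [MulAction G M]
    [AddCommGroup 𝔤] [Module ℝ 𝔤]
    (Ad : G → 𝔤 →ₗ[ℝ] 𝔤)
    (hAd1 : Ad 1 = LinearMap.id)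
    (hAdm : ∀ g h : G, Ad (g * h) = (Ad g).comp (Ad h))
    (a : G × M → (𝔤 →ₗ[ℝ] ℝ)) :
    (∀ (g₁ g₂ : G) (x : M) (X₁ X₂ : 𝔤),
        a (g₂, x) X₂ - a (g₁ * g₂, x) (Ad g₂⁻¹ X₁ + X₂) + a (g₁, g₂ • x) X₁ = 0)
    ↔ ((∀ (g : G) (x : M), a (g, x) = a (1, x)) ∧
        (∀ (g : G) (x : M), a (1, g • x) = (a (1, x)).comp (Ad g⁻¹))) := by
  constructor
  · intro h
    have hconst : ∀ (g : G) (x : M), a (g, x) = a (1, x) := by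
      intro g x
      ext X
      have := h g 1 x 0 X
      simp [map_zero] at this
      linarith [this]
    refine ⟨hconst, ?_⟩
    intro g x
    ext X
    have := h 1 g x X 0
    simp [map_zero, hconst] at this
    simp only [LinearMap.comp_apply]
    linarith [this]
  · rintro ⟨hconst, hequiv⟩ g₁ g₂ x X₁ X₂
    rw [hconst g₂ x, hconst (g₁ * g₂) x, hconst g₁ (g₂ • x), hequiv g₂ x]
    simp [map_add]
end
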